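/- Let T be a left linear track category with linearity tracks satisfying the linearity track equations, and for a morphism a define Γ(−1)_a := (Γ_a^{1,−1} − a)⁻¹, a track a(−1) ⇒ −a. Then for all m, n ∈ ℤ (allowing negatives), the addition formula Γ(m+n)_a = (Γ(m)_a + Γ(n)_a) ∘ Γ_a^{m,n} holds, where Γ(k)_a : a(k·1) ⇒ k·a denotes the k-fold linearity track extended to all integers via Γ(−m)_a := (−Γ(m)_a) ∘ (Γ(−1)_a ⊗ (m·1)) with the compatibility of Lemma on multiplying by negatives, Γ(0)_a := id₀, and Γ(1)_a := id_a. -/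

import Mathlib

/-! A *left linear track category*: a track category (category enriched in groupoids)
whose hom-groupoids are abelian group objects in groupoids, with strictly left linear
composition (and pointed).  Tracks are encoded non-dependently, with source `src = δ₀`
and target `tgt = δ₁`; `vcomp α β` is the vertical composite `α □ β` (first `β`, then `α`);
`wl a α = a ⊗ α` and `wr α x = α ⊗ x` are the whiskerings. -/
structure LLTrackCat (Obj : Type u) (Hom : Obj → Obj → Type v) (Trk : Obj → Obj → Type w)
    [∀ A B : Obj, AddCommGroup (Hom A B)] [∀ A B : Obj, AddCommGroup (Trk A B)] where
  src : ∀ {A B : Obj}, Trk A B → Hom A B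
  tgt : ∀ {A B : Obj}, Trk A B → Hom A B
  vid : ∀ {A B : Obj}, Hom A B → Trk A B
  vcomp : ∀ {A B : Obj}, Trk A B → Trk A B → Trk A B
  vinv : ∀ {A B : Obj}, Trk A B → Trk A B
  one : ∀ A : Obj, Hom A A
  comp : ∀ {A B C : Obj}, Hom B C → Hom A B → Hom A C
  wl : ∀ {A B C : Obj}, Hom B C → Trk A B → Trk A C
  wr : ∀ {A B C : Obj}, Trk B C → Hom A B → Trk A C
  -- each hom-groupoid is a groupoid
  src_vid : ∀ {A B : Obj} (x : Hom A B), src (vid x) = x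
  tgt_vid : ∀ {A B : Obj} (x : Hom A B), tgt (vid x) = x
  src_vcomp : ∀ {A B : Obj} (α β : Trk A B), src α = tgt β → src (vcomp α β) = src β
  tgt_vcomp : ∀ {A B : Obj} (α β : Trk A B), src α = tgt β → tgt (vcomp α β) = tgt α
  vcomp_assoc : ∀ {A B : Obj} (α β γ : Trk A B), src α = tgt β → src β = tgt γ →
    vcomp (vcomp α β) γ = vcomp α (vcomp β γ)
  vcomp_vid : ∀ {A B : Obj} (α : Trk A B), vcomp α (vid (src α)) = α
  vid_vcomp : ∀ {A B : Obj} (α : Trk A B), vcomp (vid (tgt α)) α = α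
  src_vinv : ∀ {A B : Obj} (α : Trk A B), src (vinv α) = tgt α
  tgt_vinv : ∀ {A B : Obj} (α : Trk A B), tgt (vinv α) = src α
  vcomp_vinv : ∀ {A B : Obj} (α : Trk A B), vcomp α (vinv α) = vid (tgt α)
  vinv_vcomp : ∀ {A B : Obj} (α : Trk A B), vcomp (vinv α) α = vid (src α)
  -- each hom-groupoid is an abelian group object: the structure maps are additive
  src_add : ∀ {A B : Obj} (α β : Trk A B), src (α + β) = src α + src β
  tgt_add : ∀ {A B : Obj} (α β : Trk A B), tgt (α + β) = tgt α + tgt β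
  vid_add : ∀ {A B : Obj} (x y : Hom A B), vid (x + y) = vid x + vid y
  interchange : ∀ {A B : Obj} (α α' β β' : Trk A B), src α = tgt β → src α' = tgt β' →
    vcomp (α + α') (β + β') = vcomp α β + vcomp α' β'
  -- underlying category
  comp_assoc : ∀ {A B C D : Obj} (a : Hom C D) (b : Hom B C) (c : Hom A B),
    comp (comp a b) c = comp a (comp b c)
  one_comp : ∀ {A B : Obj} (x : Hom A B), comp (one B) x = x
  comp_one : ∀ {A B : Obj} (x : Hom A B), comp x (one A) = x
  -- whiskering axioms
  src_wl : ∀ {A B C : Obj} (a : Hom B C) (α : Trk A B), src (wl a α) = comp a (src α)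
  tgt_wl : ∀ {A B C : Obj} (a : Hom B C) (α : Trk A B), tgt (wl a α) = comp a (tgt α)
  src_wr : ∀ {A B C : Obj} (α : Trk B C) (x : Hom A B), src (wr α x) = comp (src α) x
  tgt_wr : ∀ {A B C : Obj} (α : Trk B C) (x : Hom A B), tgt (wr α x) = comp (tgt α) x
  wl_vid : ∀ {A B C : Obj} (a : Hom B C) (x : Hom A B), wl a (vid x) = vid (comp a x)
  wr_vid : ∀ {A B C : Obj} (a : Hom B C) (x : Hom A B), wr (vid a) x = vid (comp a x)
  wl_vcomp : ∀ {A B C : Obj} (a : Hom B C) (α β : Trk A B), src α = tgt β →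
    wl a (vcomp α β) = vcomp (wl a α) (wl a β)
  wr_vcomp : ∀ {A B C : Obj} (α β : Trk B C) (x : Hom A B), src α = tgt β →
    wr (vcomp α β) x = vcomp (wr α x) (wr β x)
  wl_wl : ∀ {A B C D : Obj} (a : Hom C D) (b : Hom B C) (α : Trk A B),
    wl a (wl b α) = wl (comp a b) α
  wr_wr : ∀ {A B C D : Obj} (α : Trk C D) (x : Hom B C) (y : Hom A B),
    wr (wr α x) y = wr α (comp x y)
  wl_wr : ∀ {A B C D : Obj} (a : Hom C D) (α : Trk B C) (x : Hom A B),
    wr (wl a α) x = wl a (wr α x)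
  wl_one : ∀ {A B : Obj} (α : Trk A B), wl (one B) α = α
  wr_one : ∀ {A B : Obj} (α : Trk A B), wr α (one A) = α
  -- the two factorizations of the horizontal composite of two tracks agree
  htw : ∀ {A B C : Obj} (α : Trk B C) (β : Trk A B),
    vcomp (wr α (tgt β)) (wl (src α) β) = vcomp (wl (tgt α) β) (wr α (src β))
  -- composition is strictly left linear
  comp_add_left : ∀ {A B C : Obj} (a a' : Hom B C) (x : Hom A B),
    comp (a + a') x = comp a x + comp a' x
  wl_add_left : ∀ {A B C : Obj} (a a' : Hom B C) (α : Trk A B),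
    wl (a + a') α = wl a α + wl a' α
  wr_add_left : ∀ {A B C : Obj} (α α' : Trk B C) (x : Hom A B),
    wr (α + α') x = wr α x + wr α' x
  -- pointedness
  comp_zero : ∀ {A B C : Obj} (a : Hom B C), comp a (0 : Hom A B) = 0
  wl_zero : ∀ {A B C : Obj} (a : Hom B C), wl a (0 : Trk A B) = 0
  wr_zero : ∀ {A B C : Obj} (α : Trk B C), wr α (0 : Hom A B) = vid 0

/-- A system of linearity tracks `Γ a x y : a(x+y) ⇒ ax + ay` satisfying the
linearity track equations of Definition 3.3 (precomposition, postcomposition,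
symmetry, left linearity, associativity, and naturality in both variables). -/
structure LinTracks {Obj : Type u} {Hom : Obj → Obj → Type v} {Trk : Obj → Obj → Type w}
    [∀ A B : Obj, AddCommGroup (Hom A B)] [∀ A B : Obj, AddCommGroup (Trk A B)]
    (T : LLTrackCat Obj Hom Trk) where
  Γ : ∀ {X A B : Obj}, Hom A B → Hom X A → Hom X A → Trk X B
  src_Γ : ∀ {X A B : Obj} (a : Hom A B) (x y : Hom X A),
    T.src (Γ a x y) = T.comp a (x + y)
  tgt_Γ : ∀ {X A B : Obj} (a : Hom A B) (x y : Hom X A),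
    T.tgt (Γ a x y) = T.comp a x + T.comp a y
  precomp : ∀ {Y X A B : Obj} (a : Hom A B) (x y : Hom X A) (z : Hom Y X),
    Γ a (T.comp x z) (T.comp y z) = T.wr (Γ a x y) z
  postcomp : ∀ {X A B C : Obj} (b : Hom B C) (a : Hom A B) (x y : Hom X A),
    Γ (T.comp b a) x y = T.vcomp (Γ b (T.comp a x) (T.comp a y)) (T.wl b (Γ a x y))
  symm : ∀ {X A B : Obj} (a : Hom A B) (x y : Hom X A), Γ a x y = Γ a y x
  leftlin : ∀ {X A B : Obj} (a a' : Hom A B) (x y : Hom X A),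
    Γ (a + a') x y = Γ a x y + Γ a' x y
  assocΓ : ∀ {X A B : Obj} (a : Hom A B) (x y z : Hom X A),
    T.vcomp (Γ a x y + T.vid (T.comp a z)) (Γ a (x + y) z)
      = T.vcomp (T.vid (T.comp a x) + Γ a y z) (Γ a x (y + z))
  natxy : ∀ {X A B : Obj} (a : Hom A B) (G H : Trk X A),
    T.vcomp (T.wl a G + T.wl a H) (Γ a (T.src G) (T.src H))
      = T.vcomp (Γ a (T.tgt G) (T.tgt H)) (T.wl a (G + H))
  nata : ∀ {X A B : Obj} (α : Trk A B) (x y : Hom X A),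
    T.vcomp (T.wr α x + T.wr α y) (Γ (T.src α) x y)
      = T.vcomp (Γ (T.tgt α) x y) (T.wr α (x + y))

/-- The iterated linearity track `Γ(n)_a = Γ_a^{1,…,1} : a(n·1) ⇒ n·a`
(with `n` copies of the identity), defined inductively by
`Γ_a^{x₁,…,xₙ} = (Γ_a^{x₁,…,x_{n-1}} + a xₙ) ∘ Γ_a^{x₁+⋯+x_{n-1},xₙ}`,
with `Γ_a^{x₁} = id` (and `Γ(0)_a = id₀`). -/
def GN {Obj : Type u} {Hom : Obj → Obj → Type v} {Trk : Obj → Obj → Type w}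
    [∀ A B : Obj, AddCommGroup (Hom A B)] [∀ A B : Obj, AddCommGroup (Trk A B)]
    (T : LLTrackCat Obj Hom Trk) (L : LinTracks T)
    {A B : Obj} (a : Hom A B) : ℕ → Trk A B
  | 0 => T.vid 0
  | 1 => T.vid a
  | (n + 2) =>
      T.vcomp (GN T L a (n + 1) + T.vid (T.comp a (T.one A)))
        (L.Γ a ((n + 1) • T.one A) (T.one A))

/-- The track `Γ(−1)_a := (Γ_a^{1,−1} − a)⁻¹ : a(−1) ⇒ −a`. -/
def Gneg1 {Obj : Type u} {Hom : Obj → Obj → Type v} {Trk : Obj → Obj → Type w}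
    [∀ A B : Obj, AddCommGroup (Hom A B)] [∀ A B : Obj, AddCommGroup (Trk A B)]
    (T : LLTrackCat Obj Hom Trk) (L : LinTracks T)
    {A B : Obj} (a : Hom A B) : Trk A B :=
  T.vinv (L.Γ a (T.one A) (-(T.one A)) - T.vid a)

/-- `Γ(k)_a : a(k·1) ⇒ k·a` for all integers `k`: for `k ≥ 0` the iterated
linearity track, and for `k = −m < 0` defined by
`Γ(−m)_a := (−Γ(m)_a) ∘ (Γ(−1)_a ⊗ (m·1))`. -/
def GZ {Obj : Type u} {Hom : Obj → Obj → Type v} {Trk : Obj → Obj → Type w}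
    [∀ A B : Obj, AddCommGroup (Hom A B)] [∀ A B : Obj, AddCommGroup (Trk A B)]
    (T : LLTrackCat Obj Hom Trk) (L : LinTracks T)
    {A B : Obj} (a : Hom A B) (k : ℤ) : Trk A B :=
  if 0 ≤ k then GN T L a k.toNat
  else T.vcomp (-(GN T L a (-k).toNat)) (T.wr (Gneg1 T L a) ((-k).toNat • T.one A))

section Cocycle

variable {M : Type*} [AddCommGroup M] {f : ℤ → ℤ → M} {g : ℤ → M}

theorem succ_eq_of_natCast_succ_eq_of_neg_natCast_eq
    (hf : ∀ x y z, f x y + f (x + y) z = f y z + f x (y + z)) (hsymm : ∀ x y, f x y = f y x)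
    (hnat : ∀ n : ℕ, g (n + 1) = g n + f n 1) (hneg : ∀ n : ℕ, g (-n) = -g n - f n (-n))
    (k : ℤ) : g (k + 1) = g k + f k 1 := by
  cases k with
  | ofNat n => exact hnat n
  | negSucc p =>
    have hcoc : f p 1 + f (p + 1) (-(p + 1)) = f (-(p + 1)) 1 + f p (-p) := by
      rw [hf, hsymm 1, show (1 : ℤ) + -(p + 1) = -p by ring]
    have hp1 := hneg (p + 1)
    push_cast at hp1
    rw [Int.negSucc_eq, show -((p : ℤ) + 1) + 1 = -p by ring, hneg p, hp1, hnat p]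
    linear_combination (norm := module) hcoc

theorem add_eq_add_add_of_succ_eq
    (hf : ∀ x y z, f x y + f (x + y) z = f y z + f x (y + z)) (hf0 : f 0 0 = 0) (hg0 : g 0 = 0)
    (hsucc : ∀ k, g (k + 1) = g k + f k 1) (m n : ℤ) : g (m + n) = g m + g n + f m n := by
  induction n using Int.induction_on with
  | zero =>
    have h := hf m 0 0
    simp only [add_zero] at h
    rw [add_zero, hg0]
    linear_combination (norm := module) -h - hf0
  | succ n ih =>
    rw [← add_assoc, hsucc, ih, hsucc]
    linear_combination (norm := module) hf m n 1
  | pred n ih =>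
    have h1 := hsucc (m + (-n - 1))
    have h2 := hsucc (-n - 1)
    have hcoc := hf m (-n - 1) 1
    rw [show m + (-n - 1) + 1 = m + -n by ring, ih] at h1
    rw [show -(n : ℤ) - 1 + 1 = -n by ring] at h2 hcoc
    linear_combination (norm := module) -h1 + h2 - hcoc

end Cocycle

namespace LLTrackCat

variable {Obj : Type*} {Hom : Obj → Obj → Type*} {Trk : Obj → Obj → Type*}
  [∀ A B : Obj, AddCommGroup (Hom A B)] [∀ A B : Obj, AddCommGroup (Trk A B)]
  (T : LLTrackCat Obj Hom Trk) {A B C : Obj}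

theorem vid_zero : T.vid (0 : Hom A B) = 0 :=
  (AddMonoidHom.mk' T.vid T.vid_add).map_zero

theorem src_neg (α : Trk A B) : T.src (-α) = -T.src α :=
  (AddMonoidHom.mk' T.src T.src_add).map_neg α

theorem src_sub (α β : Trk A B) : T.src (α - β) = T.src α - T.src β :=
  (AddMonoidHom.mk' T.src T.src_add).map_sub α β

theorem tgt_sub (α β : Trk A B) : T.tgt (α - β) = T.tgt α - T.tgt β :=
  (AddMonoidHom.mk' T.tgt T.tgt_add).map_sub α β

theorem comp_neg_left (a : Hom B C) (x : Hom A B) : T.comp (-a) x = -T.comp a x :=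
  (AddMonoidHom.mk' (T.comp · x) (T.comp_add_left · · x)).map_neg a

theorem wr_sub_left (α β : Trk B C) (x : Hom A B) : T.wr (α - β) x = T.wr α x - T.wr β x :=
  (AddMonoidHom.mk' (T.wr · x) (T.wr_add_left · · x)).map_sub α β

theorem wr_neg_left (α : Trk B C) (x : Hom A B) : T.wr (-α) x = -T.wr α x :=
  (AddMonoidHom.mk' (T.wr · x) (T.wr_add_left · · x)).map_neg α

def red : Trk A B →+ Trk A B :=
  AddMonoidHom.mk' (fun α => α - T.vid (T.src α)) fun α β => by
    rw [T.src_add, T.vid_add]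
    abel

theorem red_apply (α : Trk A B) : T.red α = α - T.vid (T.src α) := rfl

theorem red_vid (x : Hom A B) : T.red (T.vid x) = 0 := by
  rw [red_apply, T.src_vid, sub_self]

theorem eq_of_src_eq_of_red_eq {α β : Trk A B} (hsrc : T.src α = T.src β)
    (hred : T.red α = T.red β) : α = β := by
  rwa [red_apply, red_apply, hsrc, sub_left_inj] at hred

theorem red_vcomp {α β : Trk A B} (h : T.src α = T.tgt β) :
    T.red (T.vcomp α β) = T.red α + T.red β := by
  have hsrc : T.src (α - T.vid (T.tgt β)) = 0 := by rw [src_sub, T.src_vid, h, sub_self]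
  -- interchange applied to `α = id + (α - id)` and `β = β + id₀`
  have key := T.interchange (T.vid (T.tgt β)) (α - T.vid (T.tgt β)) β (T.vid 0)
    (T.src_vid _) (by rw [hsrc, T.tgt_vid])
  rw [add_sub_cancel, T.vid_vcomp, ← hsrc, T.vcomp_vid, hsrc, vid_zero, add_zero] at key
  rw [key, red_apply, red_apply, red_apply, T.src_add, hsrc, add_zero, h]
  abel

theorem red_vinv (α : Trk A B) : T.red (T.vinv α) = -T.red α := by
  have h := congrArg T.red (T.vcomp_vinv α)
  rw [red_vcomp T (T.tgt_vinv α).symm, red_vid] at h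
  exact (neg_eq_of_add_eq_zero_right h).symm

theorem red_wr (α : Trk B C) (x : Hom A B) : T.red (T.wr α x) = T.wr (T.red α) x := by
  rw [red_apply, red_apply, wr_sub_left, T.wr_vid, T.src_wr]

end LLTrackCat

namespace LinTracks

variable {Obj : Type*} {Hom : Obj → Obj → Type*} {Trk : Obj → Obj → Type*}
  [∀ A B : Obj, AddCommGroup (Hom A B)] [∀ A B : Obj, AddCommGroup (Trk A B)]
  {T : LLTrackCat Obj Hom Trk} (L : LinTracks T) {X A B : Obj}

theorem red_Γ_add_red_Γ (a : Hom A B) (x y z : Hom X A) :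
    T.red (L.Γ a x y) + T.red (L.Γ a (x + y) z) = T.red (L.Γ a y z) + T.red (L.Γ a x (y + z)) := by
  have h := congrArg T.red (L.assocΓ a x y z)
  rwa [T.red_vcomp (by rw [T.src_add, L.src_Γ, T.src_vid, L.tgt_Γ]),
    T.red_vcomp (by rw [T.src_add, L.src_Γ, T.src_vid, L.tgt_Γ]),
    map_add, map_add, T.red_vid, T.red_vid, add_zero, zero_add] at h

theorem red_Γ_zero_zero (a : Hom A B) : T.red (L.Γ a (0 : Hom X A) 0) = 0 := by
  have h := L.precomp a (0 : Hom X A) 0 (0 : Hom X X)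
  rw [T.comp_zero, T.wr_zero] at h
  rw [h, T.red_vid]

theorem red_Γ_zero_left (a : Hom A B) (z : Hom X A) : T.red (L.Γ a 0 z) = 0 := by
  simpa [red_Γ_zero_zero] using L.red_Γ_add_red_Γ a 0 0 z

end LinTracks

section IntegerLinearityTracks

variable {Obj : Type*} {Hom : Obj → Obj → Type*} {Trk : Obj → Obj → Type*}
  [∀ A B : Obj, AddCommGroup (Hom A B)] [∀ A B : Obj, AddCommGroup (Trk A B)]
  (T : LLTrackCat Obj Hom Trk) (L : LinTracks T) {A B : Obj} (a : Hom A B)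

theorem src_GN : ∀ n : ℕ, T.src (GN T L a n) = T.comp a (n • T.one A)
  | 0 => by rw [GN, T.src_vid, zero_smul, T.comp_zero]
  | 1 => by rw [GN, T.src_vid, one_smul, T.comp_one]
  | n + 2 => by
    rw [GN, T.src_vcomp _ _ (by rw [T.src_add, src_GN (n + 1), T.src_vid, L.tgt_Γ]), L.src_Γ,
      ← succ_nsmul]

theorem red_GN_succ (n : ℕ) :
    T.red (GN T L a (n + 1)) = T.red (GN T L a n) + T.red (L.Γ a (n • T.one A) (T.one A)) := by
  cases n with
  | zero => rw [zero_smul, L.red_Γ_zero_left, GN, GN, T.red_vid, T.red_vid, add_zero]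
  | succ n =>
    rw [GN, T.red_vcomp (by rw [T.src_add, src_GN, T.src_vid, L.tgt_Γ]), map_add, T.red_vid,
      add_zero]

theorem src_Gneg1 : T.src (Gneg1 T L a) = T.comp a (-T.one A) := by
  rw [Gneg1, T.src_vinv, T.tgt_sub, L.tgt_Γ, T.tgt_vid, T.comp_one, add_sub_cancel_left]

theorem tgt_Gneg1 : T.tgt (Gneg1 T L a) = -a := by
  rw [Gneg1, T.tgt_vinv, T.src_sub, L.src_Γ, T.src_vid, add_neg_cancel, T.comp_zero, zero_sub]

theorem red_Gneg1 : T.red (Gneg1 T L a) = -T.red (L.Γ a (T.one A) (-T.one A)) := by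
  rw [Gneg1, T.red_vinv, map_sub, T.red_vid, sub_zero]

theorem src_neg_GN_eq_tgt_wr_Gneg1 (n : ℕ) :
    T.src (-GN T L a n) = T.tgt (T.wr (Gneg1 T L a) (n • T.one A)) := by
  rw [T.src_neg, src_GN, T.tgt_wr, tgt_Gneg1, T.comp_neg_left]

theorem GZ_natCast (n : ℕ) : GZ T L a n = GN T L a n := by
  rw [GZ, if_pos (Int.natCast_nonneg n), Int.toNat_natCast]

theorem GZ_negSucc (n : ℕ) :
    GZ T L a (Int.negSucc n)
      = T.vcomp (-GN T L a (n + 1)) (T.wr (Gneg1 T L a) ((n + 1) • T.one A)) := by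
  rw [GZ, if_neg (Int.negSucc_lt_zero n).not_ge]
  rfl

theorem src_GZ (k : ℤ) : T.src (GZ T L a k) = T.comp a (k • T.one A) := by
  cases k with
  | ofNat n => rw [Int.ofNat_eq_natCast, GZ_natCast, src_GN, natCast_zsmul]
  | negSucc n =>
    rw [GZ_negSucc, T.src_vcomp _ _ (src_neg_GN_eq_tgt_wr_Gneg1 T L a (n + 1)), T.src_wr,
      src_Gneg1, T.comp_assoc, T.comp_neg_left, T.one_comp, negSucc_zsmul]

theorem red_GZ_neg_natCast (n : ℕ) :
    T.red (GZ T L a (-n))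
      = -T.red (GN T L a n) - T.red (L.Γ a (n • T.one A) (-(n • T.one A))) := by
  cases n with
  | zero =>
    rw [Nat.cast_zero, neg_zero, ← Nat.cast_zero, GZ_natCast, zero_smul, neg_zero,
      L.red_Γ_zero_zero, GN, T.red_vid, neg_zero, sub_zero]
  | succ n =>
    rw [Nat.cast_succ, ← Int.negSucc_eq, GZ_negSucc,
      T.red_vcomp (src_neg_GN_eq_tgt_wr_Gneg1 T L a (n + 1)), map_neg, T.red_wr, red_Gneg1,
      T.wr_neg_left, ← T.red_wr, ← L.precomp, T.one_comp, T.comp_neg_left, T.one_comp,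
      sub_eq_add_neg]

theorem red_Γ_zsmul_add_red_Γ_zsmul (x y z : ℤ) :
    T.red (L.Γ a (x • T.one A) (y • T.one A)) + T.red (L.Γ a ((x + y) • T.one A) (z • T.one A))
      = T.red (L.Γ a (y • T.one A) (z • T.one A))
        + T.red (L.Γ a (x • T.one A) ((y + z) • T.one A)) := by
  simpa only [add_zsmul] using L.red_Γ_add_red_Γ a _ _ _

theorem red_GZ_succ (k : ℤ) :
    T.red (GZ T L a (k + 1))
      = T.red (GZ T L a k) + T.red (L.Γ a (k • T.one A) ((1 : ℤ) • T.one A)) :=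
  succ_eq_of_natCast_succ_eq_of_neg_natCast_eq
    (f := fun k l => T.red (L.Γ a (k • T.one A) (l • T.one A)))
    (g := fun k => T.red (GZ T L a k))
    (red_Γ_zsmul_add_red_Γ_zsmul T L a)
    (fun x y => by rw [L.symm])
    (fun n => by
      rw [← Nat.cast_succ, GZ_natCast, GZ_natCast, red_GN_succ, natCast_zsmul, one_zsmul])
    (fun n => by rw [red_GZ_neg_natCast, GZ_natCast, neg_zsmul, natCast_zsmul])
    k

end IntegerLinearityTracks

/-- For all `m, n ∈ ℤ` (allowing negatives), the addition
formula `Γ(m+n)_a = (Γ(m)_a + Γ(n)_a) ∘ Γ_a^{m,n}` holds, where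
`Γ_a^{m,n} = Γ_a^{m·1_A, n·1_A}`. -/
theorem stmt18 {Obj : Type u} {Hom : Obj → Obj → Type v} {Trk : Obj → Obj → Type w}
    [∀ A B : Obj, AddCommGroup (Hom A B)] [∀ A B : Obj, AddCommGroup (Trk A B)]
    (T : LLTrackCat Obj Hom Trk) (L : LinTracks T)
    {A B : Obj} (a : Hom A B) (m n : ℤ) :
    GZ T L a (m + n)
      = T.vcomp (GZ T L a m + GZ T L a n) (L.Γ a (m • T.one A) (n • T.one A)) := by
  have hcomp : T.src (GZ T L a m + GZ T L a n) = T.tgt (L.Γ a (m • T.one A) (n • T.one A)) := by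
    rw [T.src_add, src_GZ, src_GZ, L.tgt_Γ]
  refine T.eq_of_src_eq_of_red_eq ?_ ?_
  · rw [T.src_vcomp _ _ hcomp, src_GZ, L.src_Γ, add_zsmul]
  · rw [T.red_vcomp hcomp, map_add]
    exact add_eq_add_add_of_succ_eq (f := fun k l => T.red (L.Γ a (k • T.one A) (l • T.one A)))
      (g := fun k => T.red (GZ T L a k))
      (red_Γ_zsmul_add_red_Γ_zsmul T L a)
      (by simpa only [zero_smul] using L.red_Γ_zero_zero a)
      (by rw [← Nat.cast_zero, GZ_natCast, GN, T.red_vid])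
      (red_GZ_succ T L a) m n
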